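/- arXiv:math/9911047 — 3 statements merged into one kernel-verified Lean document; each statement's English description precedes it below -/
import Mathlib

section
/- Let (X,ℓ₀) be a set of data for the symplectic differential problem and I the associated index form on H = H¹_P([a,b];ℝⁿ), I(v,w) = ∫ₐᵇ [B(α_v, α_w) + C(v,w)] dt − S(v(a), w(a)). Then the kernel of I equals {v ∈ 𝕍 : v(b) = 0}, the space of (X,ℓ₀)-solutions vanishing at b. -/
open Set MeasureTheory

noncomputable section

abbrev V (n : ℕ) : Type := Fin n → ℝ
abbrev Dl (n : ℕ) : Type := V n →L[ℝ] ℝ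

/-- The index form
`I(v,w) = ∫ₐᵇ [B⁻¹(v'−Av, w'−Aw) + C(v,w)] dt − S(v(a),w(a))`. -/
def Iform (n : ℕ) (a b : ℝ) (A : ℝ → V n →L[ℝ] V n)
    (Binv : ℝ → V n →L[ℝ] Dl n) (C : ℝ → V n →L[ℝ] Dl n)
    (S : V n →L[ℝ] V n →L[ℝ] ℝ) (v w : ℝ → V n) : ℝ :=
  (∫ t in a..b,
    ((Binv t (derivWithin v (Icc a b) t - A t (v t)))
        (derivWithin w (Icc a b) t - A t (w t)) +
      (C t (v t)) (w t))) - S (v a) (w a)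

/-- `v` belongs to `H¹_P([a,b];ℝⁿ)` (here: `v` is `C¹` on `[a,b]`, `v(a) ∈ P`,
`v(b) = 0`). -/
def Adm (n : ℕ) (a b : ℝ) (P : Submodule ℝ (V n)) (v : ℝ → V n) : Prop :=
  ContinuousOn v (Icc a b) ∧
  (∃ dv : ℝ → V n, ContinuousOn dv (Icc a b) ∧
    ∀ t ∈ Icc a b, HasDerivWithinAt v (dv t) (Icc a b) t) ∧
  v a ∈ P ∧ v b = 0

/-- `v` is an `(X,ℓ₀)`-solution, where `ℓ₀` corresponds to the pair `(P,S)`: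
the pair `(v, α_v)` with `α_v = B⁻¹(v'−Av)` solves the symplectic system and
satisfies the initial conditions `v(a) ∈ P`, `α_v(a)|_P + S(v(a),·)|_P = 0`. -/
def IsSolV (n : ℕ) (a b : ℝ) (A : ℝ → V n →L[ℝ] V n)
    (Binv : ℝ → V n →L[ℝ] Dl n) (C : ℝ → V n →L[ℝ] Dl n)
    (P : Submodule ℝ (V n)) (S : V n →L[ℝ] V n →L[ℝ] ℝ) (v : ℝ → V n) : Prop :=
  ∃ dv : ℝ → V n,
    (∀ t ∈ Icc a b, HasDerivWithinAt v (dv t) (Icc a b) t) ∧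
    (∀ t ∈ Icc a b,
      HasDerivWithinAt (fun s => Binv s (dv s - A s (v s)))
        (C t (v t) - (Binv t (dv t - A t (v t))).comp (A t)) (Icc a b) t) ∧
    v a ∈ P ∧
    (∀ w ∈ P, (Binv a (dv a - A a (v a))) w + S (v a) w = 0)

lemma ftc2' {E : Type*} [NormedAddCommGroup E] [NormedSpace ℝ E] [CompleteSpace E]
    {a b : ℝ} (hab : a ≤ b) {f f' : ℝ → E}
    (hd : ∀ t ∈ Icc a b, HasDerivWithinAt f (f' t) (Icc a b) t)
    (hc : ContinuousOn f' (Icc a b)) :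
    ∫ t in a..b, f' t = f b - f a :=
  intervalIntegral.integral_eq_sub_of_hasDeriv_right_of_le hab
    (fun t ht => (hd t ht).continuousWithinAt)
    (fun t ht => ((hd t (Ioo_subset_Icc_self ht)).hasDerivAt
      (Icc_mem_nhds ht.1 ht.2)).hasDerivWithinAt)
    (hc.intervalIntegrable_of_Icc hab)

lemma ftc1' {E : Type*} [NormedAddCommGroup E] [NormedSpace ℝ E] [CompleteSpace E]
    {a b : ℝ} (hab : a ≤ b)
    {g : ℝ → E} (hg : ContinuousOn g (Icc a b)) {t : ℝ} (ht : t ∈ Icc a b) :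
    HasDerivWithinAt (fun u => ∫ s in a..u, g s) (g t) (Icc a b) t := by
  haveI : Fact (t ∈ Icc a b) := ⟨ht⟩
  exact intervalIntegral.integral_hasDerivWithinAt_right
    ((hg.mono (Icc_subset_Icc le_rfl ht.2)).intervalIntegrable_of_Icc ht.1)
    (hg.stronglyMeasurableAtFilter_nhdsWithin measurableSet_Icc t)
    (hg t ht)

def sharpL (n : ℕ) : Dl n →L[ℝ] V n :=
  ContinuousLinearMap.pi fun i => ContinuousLinearMap.apply ℝ ℝ (Pi.single i 1)

lemma apply_eq_sum {n : ℕ} (φ : Dl n) (x : V n) :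
    φ x = ∑ i, x i * φ (Pi.single i 1) := by
  have hx : x = ∑ i, x i • (Pi.single i 1 : V n) := by
    funext j
    simp [Finset.sum_apply, Pi.single_apply]
  conv_lhs => rw [hx]
  rw [map_sum]
  simp [smul_eq_mul]

lemma sharp_self {n : ℕ} (φ : Dl n) :
    φ (sharpL n φ) = ∑ i, (φ (Pi.single i 1))^2 := by
  rw [apply_eq_sum φ (sharpL n φ)]
  refine Finset.sum_congr rfl fun i _ => ?_
  simp [sharpL, sq, ContinuousLinearMap.pi_apply]

lemma sharp_self_nonneg {n : ℕ} (φ : Dl n) : 0 ≤ φ (sharpL n φ) := by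
  rw [sharp_self]; exact Finset.sum_nonneg fun i _ => sq_nonneg _

lemma eq_zero_of_sharp_self {n : ℕ} (φ : Dl n) (h : φ (sharpL n φ) = 0) : φ = 0 := by
  rw [sharp_self] at h
  have hz : ∀ i ∈ Finset.univ, φ (Pi.single i 1) ^ 2 = 0 :=
    (Finset.sum_eq_zero_iff_of_nonneg (fun i _ => sq_nonneg _)).mp h
  ext x
  rw [apply_eq_sum φ x]
  simp only [ContinuousLinearMap.zero_apply]
  refine Finset.sum_eq_zero fun i _ => ?_
  have := hz i (Finset.mem_univ i)
  rw [sq_eq_zero_iff] at this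
  rw [this, mul_zero]

lemma zero_of_nonneg_int_zero {a b : ℝ} (hab : a < b) {q : ℝ → ℝ}
    (hq : ContinuousOn q (Icc a b)) (hnn : ∀ t ∈ Icc a b, 0 ≤ q t)
    (hint : (∫ t in a..b, q t) = 0) : ∀ t ∈ Icc a b, q t = 0 := by
  have hqi : IntervalIntegrable q volume a b := hq.intervalIntegrable_of_Icc hab.le
  have h0 : q =ᵐ[volume.restrict (Ioc a b)] 0 := by
    rw [← intervalIntegral.integral_eq_zero_iff_of_le_of_nonneg_ae hab.le ?_ hqi]
    · exact hint
    · filter_upwards [ae_restrict_mem measurableSet_Ioc] with t ht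
        using hnn t (Ioc_subset_Icc_self ht)
  have h1 : q =ᵐ[volume.restrict (Icc a b)] 0 := by
    rwa [Measure.restrict_congr_set Ioc_ae_eq_Icc] at h0
  exact Measure.eqOn_of_ae_eq h1 hq continuousOn_const
    ((closure_interior_Icc hab.ne).symm.subset)

lemma Binv_contOn {n : ℕ} {a b : ℝ} {B : ℝ → Dl n →L[ℝ] V n} {Binv : ℝ → V n →L[ℝ] Dl n}
    (hBc : ContinuousOn B (Icc a b))
    (hBinv : ∀ t ∈ Icc a b, (∀ x : V n, B t (Binv t x) = x) ∧
      (∀ α : Dl n, Binv t (B t α) = α)) :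
    ContinuousOn Binv (Icc a b) := by
  let σ : V n ≃L[ℝ] Dl n :=
    ((Pi.basisFun ℝ (Fin n)).toDualEquiv.trans
      (LinearMap.toContinuousLinearMap :
        Module.Dual ℝ (V n) ≃ₗ[ℝ] (V n →L[ℝ] ℝ))).toContinuousLinearEquiv
  let σc : V n →L[ℝ] Dl n := σ
  let σi : Dl n →L[ℝ] V n := σ.symm
  have hσ1 : ∀ y : Dl n, σc (σi y) = y := fun y => by
    simp only [σc, σi, ContinuousLinearEquiv.coe_coe, ContinuousLinearEquiv.apply_symm_apply]
  have hσ2 : ∀ x : V n, σi (σc x) = x := fun x => by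
    simp only [σc, σi, ContinuousLinearEquiv.coe_coe, ContinuousLinearEquiv.symm_apply_apply]
  have hunit : ∀ t ∈ Icc a b,
      ((B t).comp σc) * (σi.comp (Binv t)) = 1 ∧
      (σi.comp (Binv t)) * ((B t).comp σc) = 1 := by
    intro t ht
    constructor
    · refine ContinuousLinearMap.ext fun x => ?_
      simp only [ContinuousLinearMap.mul_apply, ContinuousLinearMap.comp_apply,
        ContinuousLinearMap.one_apply]
      rw [hσ1, (hBinv t ht).1]
    · refine ContinuousLinearMap.ext fun x => ?_
      simp only [ContinuousLinearMap.mul_apply, ContinuousLinearMap.comp_apply,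
        ContinuousLinearMap.one_apply]
      rw [(hBinv t ht).2, hσ2]
  have key : ∀ t ∈ Icc a b, Binv t = σc.comp (Ring.inverse ((B t).comp σc)) := by
    intro t ht
    have h1 : Ring.inverse ((B t).comp σc) = σi.comp (Binv t) :=
      Ring.inverse_unit
        (⟨(B t).comp σc, σi.comp (Binv t), (hunit t ht).1, (hunit t ht).2⟩ :
          (V n →L[ℝ] V n)ˣ)
    rw [h1]
    refine ContinuousLinearMap.ext fun x => ?_
    simp only [ContinuousLinearMap.comp_apply]
    rw [hσ1]
  have hMc : ContinuousOn (fun t => (B t).comp σc) (Icc a b) :=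
    ((ContinuousLinearMap.compL ℝ (V n) (Dl n) (V n)).flip σc).continuous.comp_continuousOn hBc
  have hRc : ContinuousOn (fun t => Ring.inverse ((B t).comp σc)) (Icc a b) := by
    intro t ht
    have hCA : ContinuousAt Ring.inverse ((B t).comp σc) :=
      NormedRing.inverse_continuousAt
        (⟨(B t).comp σc, σi.comp (Binv t), (hunit t ht).1, (hunit t ht).2⟩ :
          (V n →L[ℝ] V n)ˣ)
    exact ContinuousAt.comp_continuousWithinAt (f := fun u => (B u).comp σc) hCA (hMc t ht)
  have hInv : ContinuousOn (fun t => σc.comp (Ring.inverse ((B t).comp σc))) (Icc a b) :=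
    (ContinuousLinearMap.compL ℝ (V n) (V n) (Dl n) σc).continuous.comp_continuousOn hRc
  exact hInv.congr key

/-- The kernel of the index form `I` on `H¹_P([a,b];ℝⁿ)` is exactly the space of
`(X,ℓ₀)`-solutions vanishing at `b`. -/
theorem stmt_11 (n : ℕ) (a b : ℝ) (hab : a < b)
    (A dA : ℝ → V n →L[ℝ] V n) (B dB : ℝ → Dl n →L[ℝ] V n)
    (Binv : ℝ → V n →L[ℝ] Dl n) (C : ℝ → V n →L[ℝ] Dl n)
    (hA : ∀ t ∈ Icc a b, HasDerivWithinAt A (dA t) (Icc a b) t)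
    (hdAc : ContinuousOn dA (Icc a b))
    (hB : ∀ t ∈ Icc a b, HasDerivWithinAt B (dB t) (Icc a b) t)
    (hdBc : ContinuousOn dB (Icc a b))
    (hCc : ContinuousOn C (Icc a b))
    (hBinv : ∀ t ∈ Icc a b, (∀ x : V n, B t (Binv t x) = x) ∧
      (∀ α : Dl n, Binv t (B t α) = α))
    (hBsymm : ∀ t ∈ Icc a b, ∀ α β : Dl n, β (B t α) = α (B t β))
    (hCsymm : ∀ t ∈ Icc a b, ∀ x y : V n, C t x y = C t y x)
    (P : Submodule ℝ (V n)) (S : V n →L[ℝ] V n →L[ℝ] ℝ)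
    (hSsymm : ∀ x y : V n, S x y = S y x) :
    ∀ v : ℝ → V n, Adm n a b P v →
      ((∀ w : ℝ → V n, Adm n a b P w → Iform n a b A Binv C S v w = 0) ↔
        IsSolV n a b A Binv C P S v) := by
  intro v hv
  obtain ⟨hvc, ⟨dv, hdvc, hdv⟩, hvaP, hvb⟩ := hv
  have haI : a ∈ Icc a b := left_mem_Icc.mpr hab.le
  have hbI : b ∈ Icc a b := right_mem_Icc.mpr hab.le
  have hba : b - a ≠ 0 := sub_ne_zero.mpr hab.ne'
  have hAc : ContinuousOn A (Icc a b) := fun t ht => (hA t ht).continuousWithinAt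
  have hBc : ContinuousOn B (Icc a b) := fun t ht => (hB t ht).hasFDerivWithinAt.continuousWithinAt
  have hBinvc : ContinuousOn Binv (Icc a b) := Binv_contOn hBc hBinv
  set αv : ℝ → Dl n := fun t => Binv t (dv t - A t (v t)) with hαvdef
  have hαvc : ContinuousOn αv (Icc a b) :=
    hBinvc.clm_apply (hdvc.sub (hAc.clm_apply hvc))
  set g : ℝ → Dl n := fun t => C t (v t) - (αv t).comp (A t) with hgdef
  have hgc : ContinuousOn g (Icc a b) := by
    apply (hCc.clm_apply hvc).sub
    exact ((ContinuousLinearMap.compL ℝ (V n) (V n) ℝ).continuous.comp_continuousOn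
      hαvc).clm_apply hAc
  have Iform_eq : ∀ w dw : ℝ → V n,
      (∀ t ∈ Icc a b, HasDerivWithinAt w (dw t) (Icc a b) t) →
      Iform n a b A Binv C S v w
        = (∫ t in a..b, (g t (w t) + αv t (dw t))) - S (v a) (w a) := by
    intro w dw hdw
    unfold Iform
    congr 1
    apply intervalIntegral.integral_congr
    intro t ht
    rw [uIcc_of_le hab.le] at ht
    dsimp only
    rw [(hdv t ht).derivWithin (uniqueDiffOn_Icc hab t ht),
        (hdw t ht).derivWithin (uniqueDiffOn_Icc hab t ht)]
    simp only [hgdef, hαvdef, map_sub, ContinuousLinearMap.sub_apply,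
      ContinuousLinearMap.comp_apply]
    ring
  constructor
  · -- kernel → solution
    intro hker
    set γ : ℝ → Dl n := fun u => ∫ s in a..u, g s with hγdef
    have hγd : ∀ t ∈ Icc a b, HasDerivWithinAt γ (g t) (Icc a b) t :=
      fun t ht => ftc1' hab.le hgc ht
    have hγc : ContinuousOn γ (Icc a b) := fun t ht => (hγd t ht).continuousWithinAt
    have hγa : γ a = 0 := intervalIntegral.integral_same
    have star : ∀ w dw : ℝ → V n, ContinuousOn w (Icc a b) → ContinuousOn dw (Icc a b) →
        (∀ t ∈ Icc a b, HasDerivWithinAt w (dw t) (Icc a b) t) → w a ∈ P → w b = 0 →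
        (∫ t in a..b, (αv t (dw t) - γ t (dw t))) = S (v a) (w a) := by
      intro w dw hwc hdwc hdw hwa hwb
      have h0 := hker w ⟨hwc, ⟨dw, hdwc, hdw⟩, hwa, hwb⟩
      rw [Iform_eq w dw hdw, sub_eq_zero] at h0
      have hibp : (∫ t in a..b, (g t (w t) + γ t (dw t))) = 0 := by
        rw [ftc2' hab.le (fun t ht => (hγd t ht).clm_apply (hdw t ht))
          ((hgc.clm_apply hwc).add (hγc.clm_apply hdwc)), hwb, hγa]
        simp
      have hint1 : IntervalIntegrable (fun t => g t (w t) + αv t (dw t)) volume a b :=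
        ((hgc.clm_apply hwc).add (hαvc.clm_apply hdwc)).intervalIntegrable_of_Icc hab.le
      have hint2 : IntervalIntegrable (fun t => g t (w t) + γ t (dw t)) volume a b :=
        ((hgc.clm_apply hwc).add (hγc.clm_apply hdwc)).intervalIntegrable_of_Icc hab.le
      have hsplit : (∫ t in a..b, (αv t (dw t) - γ t (dw t)))
          = (∫ t in a..b, (g t (w t) + αv t (dw t)))
            - (∫ t in a..b, (g t (w t) + γ t (dw t))) := by
        rw [← intervalIntegral.integral_sub hint1 hint2]
        apply intervalIntegral.integral_congr
        intro t ht
        ring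
      rw [hsplit, h0, hibp, sub_zero]
    -- du Bois-Reymond
    set f : ℝ → Dl n := fun t => αv t - γ t with hfdef
    have hfc : ContinuousOn f (Icc a b) := hαvc.sub hγc
    have hfi : IntervalIntegrable f volume a b := hfc.intervalIntegrable_of_Icc hab.le
    set c : Dl n := (b - a)⁻¹ • ∫ t in a..b, f t with hcdef
    have hintc : (∫ t in a..b, (f t - c)) = 0 := by
      rw [intervalIntegral.integral_sub hfi intervalIntegrable_const,
        intervalIntegral.integral_const, hcdef, smul_smul, mul_inv_cancel₀ hba,
        one_smul, sub_self]
    have hfci : IntervalIntegrable (fun t => f t - c) volume a b :=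
      hfi.sub intervalIntegrable_const
    set w0 : ℝ → V n := fun u => ∫ s in a..u, sharpL n (f s - c) with hw0def
    have hdw0c : ContinuousOn (fun s => sharpL n (f s - c)) (Icc a b) :=
      (sharpL n).continuous.comp_continuousOn (hfc.sub continuousOn_const)
    have hdw0 : ∀ t ∈ Icc a b, HasDerivWithinAt w0 (sharpL n (f t - c)) (Icc a b) t :=
      fun t ht => ftc1' hab.le hdw0c ht
    have hw0c : ContinuousOn w0 (Icc a b) := fun t ht => (hdw0 t ht).continuousWithinAt
    have hw0a : w0 a = 0 := intervalIntegral.integral_same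
    have hsharpint : (∫ s in a..b, sharpL n (f s - c)) = 0 := by
      rw [ContinuousLinearMap.intervalIntegral_comp_comm _ hfci, hintc, map_zero]
    have hw0b : w0 b = 0 := hsharpint
    have hstar0 : (∫ t in a..b, (αv t (sharpL n (f t - c))
        - γ t (sharpL n (f t - c)))) = S (v a) (w0 a) :=
      star w0 (fun s => sharpL n (f s - c)) hw0c hdw0c hdw0
        (by rw [hw0a]; exact P.zero_mem) hw0b
    rw [hw0a, (S (v a)).map_zero] at hstar0
    have hc0 : (∫ t in a..b, c (sharpL n (f t - c))) = 0 := by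
      rw [ContinuousLinearMap.intervalIntegral_comp_comm c
        (hdw0c.intervalIntegrable_of_Icc hab.le), hsharpint, map_zero]
    have hq0 : (∫ t in a..b, (f t - c) (sharpL n (f t - c))) = 0 := by
      have hintq1 : IntervalIntegrable (fun t => αv t (sharpL n (f t - c))
          - γ t (sharpL n (f t - c))) volume a b :=
        ((hαvc.clm_apply hdw0c).sub (hγc.clm_apply hdw0c)).intervalIntegrable_of_Icc hab.le
      have hintq2 : IntervalIntegrable (fun t => c (sharpL n (f t - c))) volume a b :=
        (c.continuous.comp_continuousOn hdw0c).intervalIntegrable_of_Icc hab.le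
      have hsplit : (∫ t in a..b, (f t - c) (sharpL n (f t - c)))
          = (∫ t in a..b, (αv t (sharpL n (f t - c)) - γ t (sharpL n (f t - c))))
            - (∫ t in a..b, c (sharpL n (f t - c))) := by
        rw [← intervalIntegral.integral_sub hintq1 hintq2]
        apply intervalIntegral.integral_congr
        intro t ht
        simp only [hfdef, ContinuousLinearMap.sub_apply]
      rw [hsplit, hstar0, hc0, sub_zero]
    have hfeq : ∀ t ∈ Icc a b, f t = c := by
      intro t ht
      have hz := zero_of_nonneg_int_zero hab
        ((hfc.sub continuousOn_const).clm_apply hdw0c)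
        (fun s _ => sharp_self_nonneg (f s - c)) hq0 t ht
      exact sub_eq_zero.mp (eq_zero_of_sharp_self (f t - c) hz)
    have hαveq : ∀ t ∈ Icc a b, αv t = c + γ t := by
      intro t ht
      have h := hfeq t ht
      rw [hfdef] at h
      simp only at h
      rw [sub_eq_iff_eq_add] at h
      rw [h, add_comm]
    have hαd : ∀ t ∈ Icc a b, HasDerivWithinAt αv (g t) (Icc a b) t := by
      intro t ht
      exact ((hγd t ht).const_add c).congr (fun s hs => hαveq s hs) (hαveq t ht)
    have hca : c = αv a := by
      have h := hfeq a haI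
      rw [hfdef] at h
      simp only at h
      rw [hγa, sub_zero] at h
      exact h.symm
    refine ⟨dv, hdv, fun t ht => hαd t ht, hvaP, ?_⟩
    intro p hp
    set w1 : ℝ → V n := fun t => ((b - t) * (b - a)⁻¹) • p with hw1def
    have hdw1 : ∀ t ∈ Icc a b, HasDerivWithinAt w1 (-(b - a)⁻¹ • p) (Icc a b) t := by
      intro t ht
      have h : HasDerivAt (fun u => (b - u) * (b - a)⁻¹) (-(b - a)⁻¹) t := by
        simpa using ((hasDerivAt_id t).const_sub b).mul_const (b - a)⁻¹
      exact (h.smul_const p).hasDerivWithinAt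
    have hw1c : ContinuousOn w1 (Icc a b) :=
      (((continuous_const.sub continuous_id).mul continuous_const).smul
        continuous_const).continuousOn
    have hw1a : w1 a = p := by
      rw [hw1def]
      simp only
      rw [mul_inv_cancel₀ hba, one_smul]
    have hw1b : w1 b = 0 := by
      rw [hw1def]
      simp
    have hstar1 : (∫ t in a..b, (αv t (-(b - a)⁻¹ • p) - γ t (-(b - a)⁻¹ • p)))
        = S (v a) (w1 a) :=
      star w1 (fun _ => -(b - a)⁻¹ • p) hw1c continuousOn_const hdw1
        (by rw [hw1a]; exact hp) hw1b
    have hLHS : (∫ t in a..b, (αv t (-(b - a)⁻¹ • p) - γ t (-(b - a)⁻¹ • p)))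
        = -(c p) := by
      rw [intervalIntegral.integral_congr (g := fun _ => -(b - a)⁻¹ * c p)
        (fun t ht => ?_)]
      · rw [intervalIntegral.integral_const, smul_eq_mul]
        field_simp
      · rw [uIcc_of_le hab.le] at ht
        dsimp only
        rw [hαveq t ht]
        simp only [ContinuousLinearMap.add_apply, ContinuousLinearMap.map_smul,
          smul_eq_mul]
        ring
    rw [hLHS, hw1a] at hstar1
    have : αv a p + S (v a) p = 0 := by
      rw [← hca]
      linarith
    exact this
  · -- solution → kernel
    rintro ⟨dv', hdv', hα', hvaP', hinit⟩ w hw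
    obtain ⟨hwc, ⟨dw, hdwc, hdw⟩, hwaP, hwb⟩ := hw
    rw [Iform_eq w dw hdw]
    have hdveq : ∀ t ∈ Icc a b, dv' t = dv t := by
      intro t ht
      rw [← (hdv' t ht).derivWithin (uniqueDiffOn_Icc hab t ht),
        ← (hdv t ht).derivWithin (uniqueDiffOn_Icc hab t ht)]
    have hαd : ∀ t ∈ Icc a b, HasDerivWithinAt αv (g t) (Icc a b) t := by
      intro t ht
      have hfun : ∀ s ∈ Icc a b, αv s = Binv s (dv' s - A s (v s)) := by
        intro s hs
        rw [hαvdef]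
        simp only
        rw [hdveq s hs]
      have h := (hα' t ht).congr hfun (hfun t ht)
      have hder : C t (v t) - (Binv t (dv' t - A t (v t))).comp (A t) = g t := by
        rw [hgdef]
        simp only
        rw [hdveq t ht]
      rwa [hder] at h
    have hFd : ∀ t ∈ Icc a b, HasDerivWithinAt (fun s => αv s (w s))
        (g t (w t) + αv t (dw t)) (Icc a b) t :=
      fun t ht => (hαd t ht).clm_apply (hdw t ht)
    have hint : (∫ t in a..b, (g t (w t) + αv t (dw t)))
        = αv b (w b) - αv a (w a) :=
      ftc2' hab.le hFd ((hgc.clm_apply hwc).add (hαvc.clm_apply hdwc))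
    have hinita : αv a (w a) + S (v a) (w a) = 0 := by
      have h := hinit (w a) hwaP
      rw [hdveq a haI] at h
      exact h
    rw [hint, hwb]
    simp only [map_zero, zero_sub]
    linarith
end
end

section
/- If the index of the symmetric bilinear form B(t) is not zero for some t ∈ (a,b) (i.e., B is not positive definite), then the index form I has infinite index on H¹_P([a,b];ℝⁿ): there exist subspaces of arbitrarily large finite dimension on which I is negative definite. -/
open Set MeasureTheory

noncomputable section

namespace Stmt14
-- HELPERS (already verified separately, inserted here unchanged)


def bmp (r c t : ℝ) : ℝ := (max (r^2 - (t-c)^2) 0)^2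
def bmp' (r c t : ℝ) : ℝ := (-4*(t-c)) * max (r^2 - (t-c)^2) 0

lemma sqmax_hasDeriv (u : ℝ) :
    HasDerivAt (fun u : ℝ => (max u 0)^2) (2 * max u 0) u := by
  rcases lt_trichotomy u 0 with h | h | h
  · have hev : (fun v : ℝ => (max v 0)^2) =ᶠ[nhds u] fun _ => (0:ℝ) := by
      filter_upwards [Iio_mem_nhds h] with v hv
      simp [max_eq_right (le_of_lt (mem_Iio.mp hv))]
    have := (hasDerivAt_const u (0:ℝ)).congr_of_eventuallyEq hev
    simpa [max_eq_right h.le] using this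
  · subst h
    have h2 : (2 : ℝ) * max 0 0 = 0 := by simp
    rw [h2, hasDerivAt_iff_tendsto_slope]
    have key : ∀ v : ℝ, ‖slope (fun w : ℝ => (max w 0)^2) 0 v‖ ≤ ‖v‖ := by
      intro v
      rcases eq_or_ne v 0 with rfl | hv
      · simp [slope]
      have h1 : (max v 0)^2 ≤ v^2 := by
        rcases le_or_gt v 0 with h | h
        · simp [max_eq_right h, sq_nonneg]
        · simp [max_eq_left h.le]
      have : (max v 0)^2 / |v| ≤ |v| := by
        rw [div_le_iff₀ (abs_pos.mpr hv)]
        calc (max v 0)^2 ≤ v^2 := h1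
          _ = |v| * |v| := by rw [abs_mul_abs_self, sq]
      simpa [slope_def_field, Real.norm_eq_abs, max_self, zero_pow, abs_div,
        abs_of_nonneg (sq_nonneg (max v 0))] using this
    apply squeeze_zero_norm key
    exact tendsto_norm_zero.mono_left nhdsWithin_le_nhds
  · have hev : (fun v : ℝ => (max v 0)^2) =ᶠ[nhds u] fun v => v^2 := by
      filter_upwards [Ioi_mem_nhds h] with v hv
      simp [max_eq_left (le_of_lt (mem_Ioi.mp hv))]
    have h2 : (2:ℝ) * max u 0 = u * 2 := by rw [max_eq_left h.le]; ring
    rw [h2]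
    have h3 : HasDerivAt (fun v : ℝ => v^2) (u*2) u := by
      simpa [mul_comm] using ((hasDerivAt_id u).fun_pow 2)
    exact h3.congr_of_eventuallyEq hev

lemma bmp_hasDeriv (r c t : ℝ) : HasDerivAt (bmp r c) (bmp' r c t) t := by
  have hin : HasDerivAt (fun t : ℝ => r^2 - (t-c)^2) (-(2*(t-c))) t := by
    have := ((hasDerivAt_id t).sub_const c).fun_pow 2
    simpa using (hasDerivAt_const t (r^2)).fun_sub this
  have := (sqmax_hasDeriv (r^2 - (t-c)^2)).comp t hin
  have e : bmp' r c t = 2 * max (r^2 - (t-c)^2) 0 * -(2*(t-c)) := by simp [bmp']; ring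
  rw [e]; exact this

lemma bmp_cont (r c : ℝ) : Continuous (bmp r c) := by
  unfold bmp; fun_prop

lemma bmp'_cont (r c : ℝ) : Continuous (bmp' r c) := by
  unfold bmp'; fun_prop




lemma bmp_nonneg (r c t : ℝ) : 0 ≤ bmp r c t := sq_nonneg _

lemma max_eq_zero_of (r c t : ℝ) (hr : 0 ≤ r) (h : r ≤ |t - c|) :
    max (r^2 - (t-c)^2) 0 = 0 := by
  apply max_eq_right
  have h2 : r^2 ≤ (t-c)^2 := by
    nlinarith [sq_abs (t - c), abs_nonneg (t - c)]
  linarith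

lemma bmp_zero (r c t : ℝ) (hr : 0 ≤ r) (h : r ≤ |t - c|) : bmp r c t = 0 := by
  simp [bmp, max_eq_zero_of r c t hr h]

lemma bmp'_zero (r c t : ℝ) (hr : 0 ≤ r) (h : r ≤ |t - c|) : bmp' r c t = 0 := by
  simp [bmp', max_eq_zero_of r c t hr h]

lemma bmp_le (r c t : ℝ) (hr : 0 ≤ r) : bmp r c t ≤ r^4 := by
  have h1 : max (r^2 - (t-c)^2) 0 ≤ r^2 := by
    apply max_le (by nlinarith [sq_nonneg (t-c)]) (by positivity)
  have h0 : 0 ≤ max (r^2 - (t-c)^2) 0 := le_max_right _ _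
  calc bmp r c t = (max (r^2 - (t-c)^2) 0)^2 := rfl
    _ ≤ (r^2)^2 := by apply pow_le_pow_left₀ h0 h1
    _ = r^4 := by ring

lemma abs_bmp'_le (r c t : ℝ) (hr : 0 ≤ r) : |bmp' r c t| ≤ 4*r^3 := by
  rcases le_or_gt r |t - c| with h | h
  · rw [bmp'_zero r c t hr h, abs_zero]; nlinarith [pow_nonneg hr 3]
  · have h0 : 0 ≤ max (r^2 - (t-c)^2) 0 := le_max_right _ _
    have h1 : max (r^2 - (t-c)^2) 0 ≤ r^2 := by
      apply max_le (by nlinarith [sq_nonneg (t-c)]) (by positivity)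
    have : |bmp' r c t| = 4 * |t - c| * max (r^2 - (t-c)^2) 0 := by
      rw [bmp', abs_mul, abs_of_nonneg h0]
      congr 1
      rw [abs_mul]
      norm_num
    rw [this]
    calc 4 * |t - c| * max (r^2 - (t-c)^2) 0 ≤ 4 * r * r^2 := by
          apply mul_le_mul (by nlinarith [abs_nonneg (t-c)]) h1 h0 (by positivity)
      _ = 4*r^3 := by ring

lemma integral_bmp'_sq (r c : ℝ) (hr : 0 ≤ r) :
    ∫ t in (c-r)..(c+r), (bmp' r c t)^2 = 256/105 * r^7 := by
  have hcong : EqOn (fun t => (bmp' r c t)^2)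
      (fun t => 16*(t-c)^2*(r^2 - (t-c)^2)^2) (uIcc (c-r) (c+r)) := by
    intro t ht
    rw [uIcc_of_le (by linarith)] at ht
    have h1 : 0 ≤ r^2 - (t-c)^2 := by
      obtain ⟨h2, h3⟩ := ht
      nlinarith
    simp only [bmp', max_eq_left h1]
    ring
  rw [intervalIntegral.integral_congr hcong]
  have hF : ∀ t : ℝ, HasDerivAt
      (fun t => 16*((r^4*(t-c)^3)/3 - (2*r^2*(t-c)^5)/5 + (t-c)^7/7))
      (16*(t-c)^2*(r^2 - (t-c)^2)^2) t := by
    intro t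
    have h3 := ((hasDerivAt_id t).sub_const c).pow 3
    have h5 := ((hasDerivAt_id t).sub_const c).pow 5
    have h7 := ((hasDerivAt_id t).sub_const c).pow 7
    have := ((((h3.const_mul (r^4)).div_const 3).sub
      ((h5.const_mul (2*r^2)).div_const 5)).add (h7.div_const 7)).const_mul 16
    refine this.congr_deriv ?_
    simp only [id]
    ring
  rw [intervalIntegral.integral_eq_sub_of_hasDerivAt (fun t _ => hF t)
    (by apply Continuous.intervalIntegrable; fun_prop)]
  ring

lemma integral_bmp_sq_le (r c : ℝ) (hr : 0 ≤ r) :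
    ∫ t in (c-r)..(c+r), (bmp r c t)^2 ≤ 2*r^9 := by
  have hb : ∀ t ∈ uIoc (c-r) (c+r), ‖(bmp r c t)^2‖ ≤ r^8 := by
    intro t _
    rw [Real.norm_eq_abs, abs_of_nonneg (sq_nonneg _)]
    calc (bmp r c t)^2 ≤ (r^4)^2 := by
          apply pow_le_pow_left₀ (bmp_nonneg r c t) (bmp_le r c t hr)
      _ = r^8 := by ring
  have := intervalIntegral.norm_integral_le_of_norm_le_const hb
  rw [Real.norm_eq_abs] at this
  have h2 : |c + r - (c - r)| = 2*r := by
    rw [abs_of_nonneg (by linarith)]; ring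
  rw [h2] at this
  calc ∫ t in (c-r)..(c+r), (bmp r c t)^2 ≤ |∫ t in (c-r)..(c+r), (bmp r c t)^2| := le_abs_self _
    _ ≤ r^8 * (2*r) := this
    _ = 2*r^9 := by ring

lemma sq_sum_of_pairwise {ι : Type*} (s : Finset ι) (f : ι → ℝ)
    (h : ∀ i ∈ s, ∀ j ∈ s, i ≠ j → f i * f j = 0) :
    (∑ i ∈ s, f i)^2 = ∑ i ∈ s, (f i)^2 := by
  rw [sq, Finset.sum_mul_sum]
  apply Finset.sum_congr rfl
  intro i hi
  rw [Finset.sum_eq_single i]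
  · exact (sq (f i)).symm
  · intro j hj hne
    exact h i hi j hj (Ne.symm hne)
  · intro h'
    exact absurd hi h'

lemma integral_split (g : ℝ → ℝ) (hg : Continuous g) (a b l u : ℝ)
    (hal : a ≤ l) (hlu : l ≤ u) (hub : u ≤ b)
    (hleft : ∀ t, t ≤ l → g t = 0) (hright : ∀ t, u ≤ t → g t = 0) :
    ∫ t in a..b, g t = ∫ t in l..u, g t := by
  have i1 : IntervalIntegrable g volume a l := hg.intervalIntegrable a l
  have i2 : IntervalIntegrable g volume l u := hg.intervalIntegrable l u
  have i3 : IntervalIntegrable g volume u b := hg.intervalIntegrable u b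
  have e1 : ∫ t in a..l, g t = 0 := by
    rw [intervalIntegral.integral_congr (g := fun _ => (0:ℝ))
      (by intro t ht; rw [uIcc_of_le hal] at ht; exact hleft t ht.2)]
    simp
  have e3 : ∫ t in u..b, g t = 0 := by
    rw [intervalIntegral.integral_congr (g := fun _ => (0:ℝ))
      (by intro t ht; rw [uIcc_of_le hub] at ht; exact hright t ht.1)]
    simp
  have := intervalIntegral.integral_add_adjacent_intervals (i1.trans i2) i3
  rw [← this, ← intervalIntegral.integral_add_adjacent_intervals i1 i2, e1, e3]
  ring



lemma amgm (c L u v : ℝ) (hc : 0 < c) (hL : 0 ≤ L) :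
    2*L*(u*v) ≤ c/2*v^2 + (2*L^2/c)*u^2 := by
  rw [← sub_nonneg]
  have key : c/2*v^2 + (2*L^2/c)*u^2 - 2*L*(u*v) = (c*v - 2*L*u)^2/(2*c) := by
    field_simp
    ring
  rw [key]
  positivity

lemma one_le_abs_natCast_sub {p q : ℕ} (h : p ≠ q) : (1:ℝ) ≤ |(p:ℝ) - q| := by
  rcases lt_or_gt_of_ne h with h | h
  · have : (p:ℝ) + 1 ≤ q := by exact_mod_cast h
    rw [abs_of_nonpos (by linarith)]
    linarith
  · have : (q:ℝ) + 1 ≤ p := by exact_mod_cast h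
    rw [abs_of_nonneg (by linarith)]
    linarith

end Stmt14

open Stmt14

open intervalIntegral in
set_option maxHeartbeats 2000000 in
/-- If `B(t)` is not positive definite for some `t ∈ (a,b)`, then the index form
has infinite index on `H¹_P([a,b];ℝⁿ)`: there are subspaces of arbitrarily large
finite dimension consisting of admissible functions on which `I` is negative
definite. -/
theorem stmt_14 (n : ℕ) (a b : ℝ) (hab : a < b)
    (A : ℝ → V n →L[ℝ] V n) (B : ℝ → Dl n →L[ℝ] V n)
    (Binv : ℝ → V n →L[ℝ] Dl n) (C : ℝ → V n →L[ℝ] Dl n)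
    (hAc : ContinuousOn A (Icc a b)) (hBc : ContinuousOn B (Icc a b))
    (hBinvc : ContinuousOn Binv (Icc a b)) (hCc : ContinuousOn C (Icc a b))
    (hBinv : ∀ t ∈ Icc a b, (∀ x : V n, B t (Binv t x) = x) ∧
      (∀ α : Dl n, Binv t (B t α) = α))
    (hBsymm : ∀ t ∈ Icc a b, ∀ α β : Dl n, β (B t α) = α (B t β))
    (hCsymm : ∀ t ∈ Icc a b, ∀ x y : V n, C t x y = C t y x)
    (P : Submodule ℝ (V n)) (S : V n →L[ℝ] V n →L[ℝ] ℝ)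
    (hSsymm : ∀ x y : V n, S x y = S y x)
    -- `B(t₀)` has nonzero index for some `t₀ ∈ (a,b)`:
    (hBneg : ∃ t ∈ Ioo a b, ∃ α : Dl n, α (B t α) < 0) :
    ∀ m : ℕ, ∃ W : Submodule ℝ (ℝ → V n),
      Module.finrank ℝ W = m ∧
      (∀ v ∈ W, Adm n a b P v) ∧
      (∀ v ∈ W, v ≠ 0 → Iform n a b A Binv C S v v < 0) := by
  intro m
  obtain ⟨t₀, ht₀, α, hα⟩ := hBneg
  have ht₀' : t₀ ∈ Icc a b := ⟨ht₀.1.le, ht₀.2.le⟩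
  set x : V n := B t₀ α with hxdef
  have hx0 : x ≠ 0 := by
    intro h
    rw [h, map_zero] at hα
    exact lt_irrefl 0 hα
  set q : ℝ → ℝ := fun t => (Binv t x) x with hqdef
  have hqt₀ : q t₀ < 0 := by
    have : Binv t₀ x = α := by rw [hxdef]; exact (hBinv t₀ ht₀').2 α
    simp only [hqdef, this]
    exact hα
  set c₀ : ℝ := -(q t₀)/2 with hc₀def
  have hc₀pos : 0 < c₀ := by rw [hc₀def]; linarith
  -- neighborhood where q < -c₀
  have hqc : ContinuousOn q (Icc a b) :=
    (hBinvc.clm_apply continuousOn_const).clm_apply continuousOn_const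
  have hqa : ContinuousAt q t₀ := hqc.continuousAt (Icc_mem_nhds ht₀.1 ht₀.2)
  have hset : (q ⁻¹' Iio (-c₀)) ∩ Ioo a b ∈ nhds t₀ := by
    apply Filter.inter_mem
    · exact hqa (Iio_mem_nhds (by rw [hc₀def]; linarith))
    · exact isOpen_Ioo.mem_nhds ht₀
  obtain ⟨ε, hε, hball⟩ := Metric.mem_nhds_iff.mp hset
  set η : ℝ := ε/2 with hηdef
  have hη : 0 < η := by rw [hηdef]; linarith
  have hmem : ∀ t : ℝ, |t - t₀| ≤ η → q t < -c₀ ∧ t ∈ Ioo a b := by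
    intro t ht
    have : t ∈ Metric.ball t₀ ε := by
      rw [Metric.mem_ball, Real.dist_eq]
      rw [hηdef] at ht; linarith
    exact ⟨(hball this).1, (hball this).2⟩
  -- bounds for coefficients
  obtain ⟨tA, -, hMA'⟩ := isCompact_Icc.exists_isMaxOn (nonempty_Icc.mpr hab.le)
    (Continuous.comp_continuousOn (continuous_norm (E := V n →L[ℝ] V n)) hAc)
  obtain ⟨tB, -, hMB'⟩ := isCompact_Icc.exists_isMaxOn (nonempty_Icc.mpr hab.le)
    (Continuous.comp_continuousOn (continuous_norm (E := V n →L[ℝ] Dl n)) hBinvc)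
  obtain ⟨tC, -, hMC'⟩ := isCompact_Icc.exists_isMaxOn (nonempty_Icc.mpr hab.le)
    (Continuous.comp_continuousOn (continuous_norm (E := V n →L[ℝ] Dl n)) hCc)
  set MA := ‖A tA‖ with hMAdef
  set MB := ‖Binv tB‖ with hMBdef
  set MC := ‖C tC‖ with hMCdef
  have hMA : ∀ t ∈ Icc a b, ‖A t‖ ≤ MA := fun t ht => hMA' ht
  have hMB : ∀ t ∈ Icc a b, ‖Binv t‖ ≤ MB := fun t ht => hMB' ht
  have hMC : ∀ t ∈ Icc a b, ‖C t‖ ≤ MC := fun t ht => hMC' ht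
  have hMA0 : 0 ≤ MA := by rw [hMAdef]; exact norm_nonneg (A tA)
  have hMB0 : 0 ≤ MB := by rw [hMBdef]; exact norm_nonneg (Binv tB)
  have hMC0 : 0 ≤ MC := by rw [hMCdef]; exact norm_nonneg (C tC)
  set L1 : ℝ := MB*MA*‖x‖^2 with hL1def
  set L2 : ℝ := MB*MA^2*‖x‖^2 + MC*‖x‖^2 with hL2def
  have hL1 : 0 ≤ L1 := by
    rw [hL1def]; positivity
  have hL2 : 0 ≤ L2 := by
    rw [hL2def]; positivity
  set K' : ℝ := L2 + 2*L1^2/c₀ + 1 with hK'def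
  have hK'1 : 1 ≤ K' := by
    rw [hK'def]
    have : 0 ≤ 2*L1^2/c₀ := by positivity
    linarith
  have hK'0 : 0 < K' := by linarith
  -- choice of r
  set r : ℝ := min (η/(m+1)) (min 1 (32*c₀/(105*K'))) with hrdef
  have hrpos : 0 < r := by
    rw [hrdef]
    apply lt_min (by positivity) (lt_min one_pos (by positivity))
  have hr1 : r ≤ 1 := le_trans (min_le_right _ _) (min_le_left _ _)
  have hrs : r ≤ 32*c₀/(105*K') := le_trans (min_le_right _ _) (min_le_right _ _)
  have hr105 : 105*K'*r ≤ 32*c₀ := by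
    have h1 : (0:ℝ) < 105*K' := by linarith
    rw [le_div_iff₀ h1] at hrs
    linarith [hrs]
  have hrη : ((m:ℝ)+1)*r ≤ η := by
    have h1 : r ≤ η/(m+1) := min_le_left _ _
    have h2 : (0:ℝ) < (m:ℝ)+1 := by positivity
    rw [le_div_iff₀ h2] at h1
    linarith
  set ctr : Fin m → ℝ := fun j => t₀ - η + (2*(j:ℝ)+1)*r with hctrdef
  have hctr_in : ∀ j : Fin m, ∀ t : ℝ, |t - ctr j| ≤ r → |t - t₀| ≤ η := by
    intro j t ht
    have hj1 : (j:ℝ) + 1 ≤ m := by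
      have := j.isLt
      exact_mod_cast this
    have hj0 : (0:ℝ) ≤ (j:ℝ) := Nat.cast_nonneg _
    rw [abs_le] at ht ⊢
    rw [hctrdef] at ht
    simp only at ht
    constructor
    · nlinarith [ht.1, hrpos]
    · nlinarith [ht.2, hrpos, hrη]
  have hsep : ∀ j k : Fin m, j ≠ k → ∀ t : ℝ, r ≤ |t - ctr j| ∨ r ≤ |t - ctr k| := by
    intro j k hjk t
    by_contra hcon
    push_neg at hcon
    obtain ⟨h1, h2⟩ := hcon
    have hd : |ctr j - ctr k| < 2*r := by
      calc |ctr j - ctr k| ≤ |ctr j - t| + |t - ctr k| := abs_sub_le _ _ _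
        _ = |t - ctr j| + |t - ctr k| := by rw [abs_sub_comm]
        _ < 2*r := by linarith
    have he : ctr j - ctr k = ((j:ℝ) - k)*(2*r) := by
      rw [hctrdef]; simp only; ring
    have hge : (1:ℝ) ≤ |(j:ℝ) - (k:ℝ)| :=
      one_le_abs_natCast_sub (fun h => hjk (Fin.ext h))
    rw [he, abs_mul] at hd
    have h2r : |2*r| = 2*r := abs_of_nonneg (by linarith)
    rw [h2r] at hd
    nlinarith
  -- endpoints of supports inside (a,b)
  have hsupp : ∀ j : Fin m, a < ctr j - r ∧ ctr j + r < b := by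
    intro j
    have h1 := (hmem (ctr j - r) (hctr_in j _ (by rw [abs_sub_comm]; rw [show ctr j - (ctr j - r) = r by ring, abs_of_nonneg hrpos.le]))).2
    have h2 := (hmem (ctr j + r) (hctr_in j _ (by rw [show ctr j + r - ctr j = r by ring, abs_of_nonneg hrpos.le]))).2
    exact ⟨h1.1, h2.2⟩
  -- bumps vanish at a and b
  have hbmpa : ∀ j : Fin m, bmp r (ctr j) a = 0 ∧ bmp' r (ctr j) a = 0 := by
    intro j
    have h1 : r ≤ |a - ctr j| := by
      have := (hsupp j).1
      rw [abs_sub_comm, abs_of_nonneg (by linarith)]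
      linarith
    exact ⟨bmp_zero _ _ _ hrpos.le h1, bmp'_zero _ _ _ hrpos.le h1⟩
  have hbmpb : ∀ j : Fin m, bmp r (ctr j) b = 0 ∧ bmp' r (ctr j) b = 0 := by
    intro j
    have h1 : r ≤ |b - ctr j| := by
      have := (hsupp j).2
      rw [abs_of_nonneg (by linarith)]
      linarith
    exact ⟨bmp_zero _ _ _ hrpos.le h1, bmp'_zero _ _ _ hrpos.le h1⟩
  -- the linear map
  set Φ : (Fin m → ℝ) →ₗ[ℝ] (ℝ → V n) :=
    { toFun := fun co => fun t => (∑ j, co j * bmp r (ctr j) t) • x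
      map_add' := by
        intro c1 c2
        funext t
        show (∑ j, (c1 j + c2 j) * bmp r (ctr j) t) • x
            = (∑ j, c1 j * bmp r (ctr j) t) • x + (∑ j, c2 j * bmp r (ctr j) t) • x
        rw [← add_smul, ← Finset.sum_add_distrib]
        congr 1
        exact Finset.sum_congr rfl fun j _ => by ring
      map_smul' := by
        intro s0 c1
        funext t
        show (∑ j, (s0 * c1 j) * bmp r (ctr j) t) • x
            = s0 • ((∑ j, c1 j * bmp r (ctr j) t) • x)
        rw [smul_smul, Finset.mul_sum]
        congr 1
        exact Finset.sum_congr rfl fun j _ => by ring } with hΦdef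
  have hΦ : ∀ (co : Fin m → ℝ) (t : ℝ), Φ co t = (∑ j, co j * bmp r (ctr j) t) • x :=
    fun co t => rfl
  -- injectivity
  have hΦinj : Function.Injective Φ := by
    rw [← LinearMap.ker_eq_bot, LinearMap.ker_eq_bot']
    intro co hco
    funext j
    have hco' := congrFun hco (ctr j)
    rw [hΦ] at hco'
    have hsum : ∑ k, co k * bmp r (ctr k) (ctr j) = co j * r^4 := by
      rw [Finset.sum_eq_single j]
      · congr 1
        have : ctr j - ctr j = 0 := by ring
        simp only [bmp, this]
        rw [max_eq_left (by nlinarith [sq_nonneg r] : (0:ℝ) ≤ r^2 - 0^2)]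
        ring_nf
      · intro k _ hkj
        have := hsep j k (fun h => hkj (h ▸ rfl)) (ctr j)
        rcases this with h | h
        · exfalso
          rw [sub_self, abs_zero] at h
          linarith
        · rw [bmp_zero _ _ _ hrpos.le h, mul_zero]
      · intro h'
        exact absurd (Finset.mem_univ j) h'
    rw [hsum] at hco'
    rcases smul_eq_zero.mp hco' with h | h
    · rcases mul_eq_zero.mp h with h | h
      · exact h
      · exfalso
        have : (0:ℝ) < r^4 := by positivity
        rw [h] at this
        exact lt_irrefl 0 this
    · exact absurd h hx0
  refine ⟨LinearMap.range Φ, ?_, ?_, ?_⟩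
  · rw [LinearMap.finrank_range_of_inj hΦinj]
    exact Module.finrank_fin_fun ℝ
  · rintro v ⟨co, rfl⟩
    refine ⟨?_, ⟨fun t => (∑ j, co j * bmp' r (ctr j) t) • x, ?_, ?_⟩, ?_, ?_⟩
    · apply Continuous.continuousOn
      exact (continuous_finset_sum _ fun j _ => continuous_const.mul (bmp_cont r (ctr j))).smul continuous_const
    · apply Continuous.continuousOn
      exact (continuous_finset_sum _ fun j _ => continuous_const.mul (bmp'_cont r (ctr j))).smul continuous_const
    · intro t ht
      have hfd : HasDerivAt (fun t => ∑ j, co j * bmp r (ctr j) t)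
          (∑ j, co j * bmp' r (ctr j) t) t :=
        HasDerivAt.fun_sum fun j _ => (bmp_hasDeriv r (ctr j) t).const_mul (co j)
      exact (hfd.smul_const x).hasDerivWithinAt
    · have : Φ co a = 0 := by
        rw [hΦ]
        have : ∑ j, co j * bmp r (ctr j) a = 0 := by
          apply Finset.sum_eq_zero
          intro j _
          rw [(hbmpa j).1, mul_zero]
        rw [this, zero_smul]
      rw [this]
      exact P.zero_mem
    · rw [hΦ]
      have : ∑ j, co j * bmp r (ctr j) b = 0 := by
        apply Finset.sum_eq_zero
        intro j _
        rw [(hbmpb j).1, mul_zero]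
      rw [this, zero_smul]
  · rintro v ⟨co, rfl⟩ hv0
    have hco0 : co ≠ 0 := by
      intro h
      apply hv0
      rw [h, map_zero]
    set F : ℝ → ℝ := fun t => ∑ j, co j * bmp r (ctr j) t with hFdef
    set F' : ℝ → ℝ := fun t => ∑ j, co j * bmp' r (ctr j) t with hF'def
    have hFc : Continuous F :=
      continuous_finset_sum _ fun j _ => continuous_const.mul (bmp_cont r (ctr j))
    have hF'c : Continuous F' :=
      continuous_finset_sum _ fun j _ => continuous_const.mul (bmp'_cont r (ctr j))
    have hfd : ∀ t : ℝ, HasDerivAt F (F' t) t := fun t =>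
      HasDerivAt.fun_sum fun j _ => (bmp_hasDeriv r (ctr j) t).const_mul (co j)
    have hv : ∀ t : ℝ, Φ co t = F t • x := fun t => rfl
    set G : ℝ → ℝ := fun t =>
      (Binv t (F' t • x - A t (F t • x))) (F' t • x - A t (F t • x))
        + (C t (F t • x)) (F t • x) with hGdef
    have hFa : F a = 0 :=
      Finset.sum_eq_zero fun j _ => by rw [(hbmpa j).1, mul_zero]
    have hstep1 : Iform n a b A Binv C S (Φ co) (Φ co) = ∫ t in a..b, G t := by
      unfold Iform
      have hS : S (Φ co a) (Φ co a) = 0 := by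
        rw [hv a, hFa, zero_smul]; simp
      rw [hS, sub_zero]
      apply intervalIntegral.integral_congr
      intro t ht
      rw [uIcc_of_le hab.le] at ht
      have hd : derivWithin (Φ co) (Icc a b) t = F' t • x :=
        (((hfd t).smul_const x).hasDerivWithinAt).derivWithin (uniqueDiffOn_Icc hab t ht)
      simp only [hd, hv t, hGdef]
    have hout : ∀ j : Fin m, ∀ t : ℝ, (t ≤ ctr j - r ∨ ctr j + r ≤ t) → r ≤ |t - ctr j| := by
      intro j t ht
      rcases ht with h | h
      · rw [abs_sub_comm, abs_of_nonneg (by linarith)]; linarith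
      · rw [abs_of_nonneg (by linarith)]; linarith
    -- pointwise bound
    have hpt : ∀ t ∈ Icc a b, G t ≤ -(c₀/2)*(F' t)^2 + K'*(F t)^2 := by
      intro t ht
      by_cases hcase : ∃ j : Fin m, |t - ctr j| < r
      · obtain ⟨j, hj⟩ := hcase
        have hqt : q t < -c₀ := (hmem t (hctr_in j t hj.le)).1
        set z : V n := A t x with hzdef
        have hexp : G t = (F' t)^2 * ((Binv t x) x)
            - (F' t * F t) * ((Binv t x) z) - (F t * F' t) * ((Binv t z) x)
            + (F t)^2 * ((Binv t z) z) + (F t)^2 * ((C t x) x) := by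
          simp only [hGdef, _root_.map_smul, map_sub, ContinuousLinearMap.sub_apply,
            ContinuousLinearMap.smul_apply, smul_eq_mul]
          ring
        have hxn : (0:ℝ) ≤ ‖x‖ := norm_nonneg x
        have hzb : ‖z‖ ≤ MA * ‖x‖ :=
          le_trans ((A t).le_opNorm x) (mul_le_mul_of_nonneg_right (hMA t ht) hxn)
        have hBxb : ‖Binv t x‖ ≤ MB * ‖x‖ :=
          le_trans ((Binv t).le_opNorm x) (mul_le_mul_of_nonneg_right (hMB t ht) hxn)
        have hBzb : ‖Binv t z‖ ≤ MB * (MA * ‖x‖) :=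
          le_trans ((Binv t).le_opNorm z)
            (mul_le_mul (hMB t ht) hzb (norm_nonneg z) hMB0)
        have hCxb : ‖C t x‖ ≤ MC * ‖x‖ :=
          le_trans ((C t).le_opNorm x) (mul_le_mul_of_nonneg_right (hMC t ht) hxn)
        have e1 : |(Binv t x) z| ≤ L1 := by
          rw [hL1def]
          have h0 := (Binv t x).le_opNorm z
          rw [Real.norm_eq_abs] at h0
          calc |(Binv t x) z| ≤ ‖Binv t x‖ * ‖z‖ := h0
            _ ≤ (MB*‖x‖)*(MA*‖x‖) :=
                mul_le_mul hBxb hzb (norm_nonneg z) (mul_nonneg hMB0 hxn)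
            _ = MB*MA*‖x‖^2 := by ring
        have e2 : |(Binv t z) x| ≤ L1 := by
          rw [hL1def]
          have h0 := (Binv t z).le_opNorm x
          rw [Real.norm_eq_abs] at h0
          calc |(Binv t z) x| ≤ ‖Binv t z‖ * ‖x‖ := h0
            _ ≤ (MB*(MA*‖x‖))*‖x‖ :=
                mul_le_mul_of_nonneg_right hBzb hxn
            _ = MB*MA*‖x‖^2 := by ring
        have e3 : |(Binv t z) z| ≤ MB*MA^2*‖x‖^2 := by
          have h0 := (Binv t z).le_opNorm z
          rw [Real.norm_eq_abs] at h0
          calc |(Binv t z) z| ≤ ‖Binv t z‖ * ‖z‖ := h0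
            _ ≤ (MB*(MA*‖x‖))*(MA*‖x‖) :=
                mul_le_mul hBzb hzb (norm_nonneg z) (mul_nonneg hMB0 (mul_nonneg hMA0 hxn))
            _ = MB*MA^2*‖x‖^2 := by ring
        have e4 : |(C t x) x| ≤ MC*‖x‖^2 := by
          have h0 := (C t x).le_opNorm x
          rw [Real.norm_eq_abs] at h0
          calc |(C t x) x| ≤ ‖C t x‖ * ‖x‖ := h0
            _ ≤ (MC*‖x‖)*‖x‖ := mul_le_mul_of_nonneg_right hCxb hxn
            _ = MC*‖x‖^2 := by ring
        have hq' : (Binv t x) x ≤ -c₀ := le_of_lt hqt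
        have h1 : (F' t)^2 * ((Binv t x) x) ≤ (F' t)^2 * (-c₀) :=
          mul_le_mul_of_nonneg_left hq' (sq_nonneg _)
        have habs1 : -((F' t * F t) * ((Binv t x) z)) ≤ L1 * (|F t| * |F' t|) := by
          have h0 : |(F' t * F t) * ((Binv t x) z)| ≤ (|F' t| * |F t|) * L1 := by
            rw [abs_mul, abs_mul]
            exact mul_le_mul_of_nonneg_left e1 (mul_nonneg (abs_nonneg _) (abs_nonneg _))
          have h1 := neg_le_abs ((F' t * F t) * ((Binv t x) z))
          linarith only [h1, h0]
        have habs2 : -((F t * F' t) * ((Binv t z) x)) ≤ L1 * (|F t| * |F' t|) := by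
          have h0 : |(F t * F' t) * ((Binv t z) x)| ≤ (|F t| * |F' t|) * L1 := by
            rw [abs_mul, abs_mul]
            exact mul_le_mul_of_nonneg_left e2 (mul_nonneg (abs_nonneg _) (abs_nonneg _))
          have h1 := neg_le_abs ((F t * F' t) * ((Binv t z) x))
          linarith only [h1, h0]
        have habs3 : (F t)^2 * ((Binv t z) z) ≤ (F t)^2 * (MB*MA^2*‖x‖^2) :=
          mul_le_mul_of_nonneg_left (le_trans (le_abs_self _) e3) (sq_nonneg _)
        have habs4 : (F t)^2 * ((C t x) x) ≤ (F t)^2 * (MC*‖x‖^2) :=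
          mul_le_mul_of_nonneg_left (le_trans (le_abs_self _) e4) (sq_nonneg _)
        have step_a : G t ≤ -c₀*(F' t)^2 + 2*L1*(|F t| * |F' t|) + L2*(F t)^2 := by
          rw [hexp, hL2def]
          linarith only [h1, habs1, habs2, habs3, habs4]
        have step_b : 2*L1*(|F t| * |F' t|) ≤ c₀/2*(F' t)^2 + (2*L1^2/c₀)*(F t)^2 := by
          have := amgm c₀ L1 (|F t|) (|F' t|) hc₀pos hL1
          rwa [sq_abs, sq_abs] at this
        have step_c : (L2 + 2*L1^2/c₀)*(F t)^2 ≤ K'*(F t)^2 := by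
          apply mul_le_mul_of_nonneg_right _ (sq_nonneg _)
          rw [hK'def]
          linarith only []
        clear_value F F' G c₀ K' L1 L2
        linarith only [step_a, step_b, step_c]
      · push_neg at hcase
        have hF0 : F t = 0 :=
          Finset.sum_eq_zero fun j _ => by
            rw [bmp_zero _ _ _ hrpos.le (hcase j), mul_zero]
        have hF'0 : F' t = 0 :=
          Finset.sum_eq_zero fun j _ => by
            rw [bmp'_zero _ _ _ hrpos.le (hcase j), mul_zero]
        have hG0 : G t = 0 := by
          simp [hGdef, hF0, hF'0]
        rw [hG0, hF0, hF'0]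
        norm_num
    -- integrability
    have hvec : ContinuousOn (fun t => F' t • x - A t (F t • x)) (Icc a b) :=
      ((hF'c.continuousOn).smul continuousOn_const).sub
        (hAc.clm_apply ((hFc.continuousOn).smul continuousOn_const))
    have hvF : ContinuousOn (fun t => F t • x) (Icc a b) :=
      (hFc.continuousOn).smul continuousOn_const
    have hGc : ContinuousOn G (Icc a b) := by
      rw [hGdef]
      exact ((hBinvc.clm_apply hvec).clm_apply hvec).add
        ((hCc.clm_apply hvF).clm_apply hvF)
    have hint1 : IntervalIntegrable G volume a b := by
      apply ContinuousOn.intervalIntegrable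
      rw [uIcc_of_le hab.le]
      exact hGc
    have hH : Continuous (fun t => -(c₀/2)*(F' t)^2 + K'*(F t)^2) :=
      (continuous_const.mul (hF'c.pow 2)).add (continuous_const.mul (hFc.pow 2))
    have hmono : (∫ t in a..b, G t) ≤ ∫ t in a..b, (-(c₀/2)*(F' t)^2 + K'*(F t)^2) :=
      intervalIntegral.integral_mono_on hab.le hint1 (hH.intervalIntegrable a b) hpt
    have hsplit : (∫ t in a..b, (-(c₀/2)*(F' t)^2 + K'*(F t)^2))
        = -(c₀/2) * (∫ t in a..b, (F' t)^2) + K' * ∫ t in a..b, (F t)^2 := by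
      rw [intervalIntegral.integral_add (f := fun t => -(c₀/2)*(F' t)^2) (g := fun t => K'*(F t)^2)
          ((continuous_const.mul (hF'c.pow 2)).intervalIntegrable a b)
          ((continuous_const.mul (hFc.pow 2)).intervalIntegrable a b),
        intervalIntegral.integral_const_mul, intervalIntegral.integral_const_mul]
    -- pointwise squares
    have hFsq : ∀ t : ℝ, (F t)^2 = ∑ j, (co j)^2 * (bmp r (ctr j) t)^2 := by
      intro t
      rw [hFdef]
      simp only
      rw [sq_sum_of_pairwise]
      · exact Finset.sum_congr rfl fun j _ => by rw [mul_pow]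
      · intro i _ j _ hij
        rcases hsep i j hij t with h | h
        · rw [bmp_zero _ _ _ hrpos.le h]; ring
        · rw [bmp_zero _ _ _ hrpos.le h]; ring
    have hF'sq : ∀ t : ℝ, (F' t)^2 = ∑ j, (co j)^2 * (bmp' r (ctr j) t)^2 := by
      intro t
      rw [hF'def]
      simp only
      rw [sq_sum_of_pairwise]
      · exact Finset.sum_congr rfl fun j _ => by rw [mul_pow]
      · intro i _ j _ hij
        rcases hsep i j hij t with h | h
        · rw [bmp'_zero _ _ _ hrpos.le h]; ring
        · rw [bmp'_zero _ _ _ hrpos.le h]; ring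
    have hIF' : (∫ t in a..b, (F' t)^2) = (∑ j, (co j)^2) * (256/105*r^7) := by
      calc (∫ t in a..b, (F' t)^2)
          = ∫ t in a..b, ∑ j, (co j)^2 * (bmp' r (ctr j) t)^2 := by
            simp only [hF'sq]
        _ = ∑ j, ∫ t in a..b, (co j)^2 * (bmp' r (ctr j) t)^2 :=
            intervalIntegral.integral_finset_sum fun j _ =>
              (continuous_const.mul ((bmp'_cont r (ctr j)).pow 2)).intervalIntegrable a b
        _ = ∑ j, (co j)^2 * ∫ t in a..b, (bmp' r (ctr j) t)^2 := by
            simp only [intervalIntegral.integral_const_mul]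
        _ = ∑ j, (co j)^2 * (256/105*r^7) := by
            apply Finset.sum_congr rfl
            intro j _
            congr 1
            rw [integral_split (fun t => (bmp' r (ctr j) t)^2)
              ((bmp'_cont r (ctr j)).pow 2) a b (ctr j - r) (ctr j + r)
              (hsupp j).1.le (by linarith only [hrpos]) (hsupp j).2.le
              (fun t htl => by show (bmp' r (ctr j) t)^2 = 0; rw [bmp'_zero r (ctr j) t hrpos.le (hout j t (Or.inl htl))]; norm_num)
              (fun t htu => by show (bmp' r (ctr j) t)^2 = 0; rw [bmp'_zero r (ctr j) t hrpos.le (hout j t (Or.inr htu))]; norm_num)]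
            exact integral_bmp'_sq r (ctr j) hrpos.le
        _ = (∑ j, (co j)^2) * (256/105*r^7) := by rw [Finset.sum_mul]
    have hIFle : (∫ t in a..b, (F t)^2) ≤ (∑ j, (co j)^2) * (2*r^9) := by
      have hjle : ∀ j : Fin m, (∫ t in a..b, (bmp r (ctr j) t)^2) ≤ 2*r^9 := by
        intro j
        rw [integral_split (fun t => (bmp r (ctr j) t)^2)
          ((bmp_cont r (ctr j)).pow 2) a b (ctr j - r) (ctr j + r)
          (hsupp j).1.le (by linarith only [hrpos]) (hsupp j).2.le
          (fun t htl => by show (bmp r (ctr j) t)^2 = 0; rw [bmp_zero r (ctr j) t hrpos.le (hout j t (Or.inl htl))]; norm_num)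
          (fun t htu => by show (bmp r (ctr j) t)^2 = 0; rw [bmp_zero r (ctr j) t hrpos.le (hout j t (Or.inr htu))]; norm_num)]
        exact integral_bmp_sq_le r (ctr j) hrpos.le
      calc (∫ t in a..b, (F t)^2)
          = ∫ t in a..b, ∑ j, (co j)^2 * (bmp r (ctr j) t)^2 := by
            simp only [hFsq]
        _ = ∑ j, ∫ t in a..b, (co j)^2 * (bmp r (ctr j) t)^2 :=
            intervalIntegral.integral_finset_sum fun j _ =>
              (continuous_const.mul ((bmp_cont r (ctr j)).pow 2)).intervalIntegrable a b
        _ = ∑ j, (co j)^2 * ∫ t in a..b, (bmp r (ctr j) t)^2 := by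
            simp only [intervalIntegral.integral_const_mul]
        _ ≤ ∑ j, (co j)^2 * (2*r^9) :=
            Finset.sum_le_sum fun j _ =>
              mul_le_mul_of_nonneg_left (hjle j) (sq_nonneg _)
        _ = (∑ j, (co j)^2) * (2*r^9) := by rw [Finset.sum_mul]
    have hSum0 : 0 < ∑ j, (co j)^2 := by
      obtain ⟨j, hj⟩ := Function.ne_iff.mp hco0
      have h1 : 0 < (co j)^2 := (sq_abs (co j)) ▸ pow_pos (abs_pos.mpr hj) 2
      have h2 : (co j)^2 ≤ ∑ i, (co i)^2 :=
        Finset.single_le_sum (f := fun i => (co i)^2)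
          (fun i _ => sq_nonneg (co i)) (Finset.mem_univ j)
      linarith only [h1, h2]
    have hN : -(c₀/2)*(256/105*r^7) + K'*(2*r^9) < 0 := by
      have h7 : 0 < r^7 := pow_pos hrpos 7
      have h8 : 0 < r^8 := pow_pos hrpos 8
      have h8' : r^8 ≤ r^7 := by
        calc r^8 = r^7*r := by ring
          _ ≤ r^7*1 := mul_le_mul_of_nonneg_left hr1 h7.le
          _ = r^7 := by ring
      have p1 := mul_le_mul_of_nonneg_right hr105 h8.le
      have p2 := mul_le_mul_of_nonneg_right h8' hc₀pos.le
      have p3 := mul_pos hc₀pos h7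
      clear_value c₀ K' r
      linarith only [p1, p2, p3]
    have hfinal : (∫ t in a..b, G t) < 0 := by
      have h1 : -(c₀/2) * (∫ t in a..b, (F' t)^2) + K' * (∫ t in a..b, (F t)^2)
          ≤ (∑ j, (co j)^2) * (-(c₀/2)*(256/105*r^7) + K'*(2*r^9)) := by
        rw [hIF']
        have h2 : K' * (∫ t in a..b, (F t)^2) ≤ K' * ((∑ j, (co j)^2) * (2*r^9)) :=
          mul_le_mul_of_nonneg_left hIFle hK'0.le
        clear_value F F' c₀ K' r
        linarith only [h2]
      have h3 : (∑ j, (co j)^2) * (-(c₀/2)*(256/105*r^7) + K'*(2*r^9)) < 0 :=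
        mul_neg_of_pos_of_neg hSum0 hN
      calc (∫ t in a..b, G t) ≤ _ := hmono
        _ = _ := hsplit
        _ ≤ _ := h1
        _ < 0 := h3
    rw [hstep1]
    exact hfinal

end
end

section
/- Every symplectic differential system v' = Av + Bα, α' = Cv − A*α (with A, B of class C¹, C continuous, B, C symmetric, B invertible) is isomorphic to a Morse–Sturm system, i.e., to a symplectic system whose coefficient matrix has vanishing diagonal blocks: there exists a C¹ curve φ₀ in Sp(2n,ℝ;L₀) with X̃ = φ₀'φ₀⁻¹ + φ₀Xφ₀⁻¹ having à = 0. In fact one may take W = 0 and Z the solution of Z' = −ZA, Z(a) = Id. -/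
open Set
open scoped NNReal

noncomputable section


set_option linter.unusedSectionVars false

variable {E : Type*} [NormedAddCommGroup E] [NormedSpace ℝ E] [CompleteSpace E]

private lemma hd_singleton (f : ℝ → E) (d : E) (x : ℝ) : HasDerivWithinAt f d {x} x := by
  rw [hasDerivWithinAt_iff_tendsto_slope]
  simp

private lemma hd_nmem {f : ℝ → E} {d : E} {s : Set ℝ} {x : ℝ} (h : x ∉ closure s) :
    HasDerivWithinAt f d s x :=
  HasFDerivWithinAt.of_notMem_closure h

/-- local existence for a globally Lipschitz linear-type ODE -/
private lemma loc_ex (v : ℝ → E → E) (L : ℝ≥0) (hL : (0:ℝ) < L)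
    (hlip : ∀ t, LipschitzWith L (v t))
    (hnorm : ∀ t x, ‖v t x‖ ≤ L * ‖x‖)
    (hcont : ∀ x, Continuous fun t => v t x)
    (s t : ℝ) (hst : s ≤ t) (hstep : t - s ≤ 1 / (2 * L)) (x₀ : E) :
    ∃ f : ℝ → E, f s = x₀ ∧ ∀ u ∈ Icc s t, HasDerivWithinAt f (v u (f u)) (Icc s t) u := by
  have hpl : IsPicardLindelof v (tmin := s) (tmax := t) ⟨s, ⟨le_rfl, hst⟩⟩ x₀ (‖x₀‖₊ + 1) 0
      (L * (2 * ‖x₀‖₊ + 1)) L := by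
    constructor
    · exact fun u _ => (hlip u).lipschitzOnWith
    · exact fun x _ => (hcont x).continuousOn
    · intro u _ x hx
      have h1 : ‖x - x₀‖ ≤ ‖x₀‖ + 1 := by
        have := Metric.mem_closedBall.mp hx
        rw [dist_eq_norm] at this
        push_cast at this
        simpa using this
      have h2 : ‖x‖ ≤ 2 * ‖x₀‖ + 1 := by
        have := norm_sub_norm_le x x₀
        linarith
      push_cast
      calc ‖v u x‖ ≤ L * ‖x‖ := hnorm u x
        _ ≤ L * (2 * ‖x₀‖ + 1) := by nlinarith
    · show ((L * (2 * ‖x₀‖₊ + 1) : ℝ≥0) : ℝ) * max (t - s) (s - s) ≤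
        ((‖x₀‖₊ + 1 : ℝ≥0) : ℝ) - ((0:ℝ≥0):ℝ)
      push_cast
      have hmax : max (t - s) (s - s) = t - s := by
        rw [sub_self]; exact max_eq_left (by linarith)
      rw [hmax]
      have hx0 : (0:ℝ) ≤ ‖x₀‖ := norm_nonneg _
      rw [le_div_iff₀ (by positivity)] at hstep
      have h2 : (L:ℝ) * (t - s) ≤ 1 / 2 := by nlinarith
      have h3 : (0:ℝ) ≤ 1/2 - (L:ℝ) * (t - s) := by linarith
      have h4 : (0:ℝ) ≤ 2 * ‖x₀‖ + 1 := by linarith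
      nlinarith [mul_nonneg h3 h4]
  obtain ⟨f, hf0, hf⟩ := hpl.exists_eq_forall_mem_Icc_hasDerivWithinAt₀
  exact ⟨f, hf0, hf⟩

private lemma glob_ex (v : ℝ → E → E) (L : ℝ≥0) (hL : (0:ℝ) < L)
    (hlip : ∀ t, LipschitzWith L (v t))
    (hnorm : ∀ t x, ‖v t x‖ ≤ L * ‖x‖)
    (hcont : ∀ x, Continuous fun t => v t x) :
    ∀ k : ℕ, ∀ s t : ℝ, ∀ x₀ : E, s ≤ t → t - s ≤ (k : ℝ) * (1 / (2 * L)) →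
    ∃ f : ℝ → E, f s = x₀ ∧ ∀ u ∈ Icc s t, HasDerivWithinAt f (v u (f u)) (Icc s t) u := by
  intro k
  induction k with
  | zero =>
    intro s t x₀ hst hk
    have hts : t = s := le_antisymm (by simpa using hk) hst
    subst hts
    refine ⟨fun _ => x₀, rfl, fun u hu => ?_⟩
    rw [Icc_self] at hu ⊢
    simp only [mem_singleton_iff] at hu
    subst hu
    exact hd_singleton _ _ _
  | succ k ih =>
    intro s t x₀ hst hk
    set h : ℝ := 1 / (2 * L) with hh
    have hhpos : 0 < h := by positivity
    push_cast at hk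
    set m : ℝ := min (s + h) t with hm
    have hsm : s ≤ m := le_min (by linarith) hst
    have hmt : m ≤ t := min_le_right _ _
    have hms : m - s ≤ h := by
      have : m ≤ s + h := min_le_left _ _
      linarith
    have htm : t - m ≤ (k:ℝ) * h := by
      rcases le_total (s + h) t with hc | hc
      · have he : m = s + h := min_eq_left hc
        have : ((k:ℝ) + 1) * h = (k:ℝ) * h + h := by ring
        rw [he]; linarith
      · have he : m = t := min_eq_right hc
        rw [he]
        simp only [sub_self]
        exact mul_nonneg (Nat.cast_nonneg _) hhpos.le
    obtain ⟨f₁, hf₁s, hf₁⟩ := loc_ex v L hL hlip hnorm hcont s m hsm (by linarith) x₀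
    obtain ⟨f₂, hf₂m, hf₂⟩ := ih m t (f₁ m) hmt htm
    set f : ℝ → E := fun u => if u ≤ m then f₁ u else f₂ u with hf
    have heq₁ : ∀ y ∈ Icc s m, f y = f₁ y := fun y hy => if_pos hy.2
    have heq₂ : ∀ y ∈ Icc m t, f y = f₂ y := by
      intro y hy
      rcases le_or_gt y m with h1 | h1
      · have hym : y = m := le_antisymm h1 hy.1
        subst hym
        simp only [hf, if_pos le_rfl, hf₂m]
      · exact if_neg (not_le.mpr h1)
    refine ⟨f, by rw [heq₁ s ⟨le_rfl, hsm⟩, hf₁s], fun u hu => ?_⟩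
    rw [← Icc_union_Icc_eq_Icc hsm hmt]
    rcases le_or_gt u m with h1 | h1
    · have hu1 : u ∈ Icc s m := ⟨hu.1, h1⟩
      have D₁ : HasDerivWithinAt f (v u (f u)) (Icc s m) u := by
        have := (hf₁ u hu1).congr heq₁ (heq₁ u hu1)
        rwa [heq₁ u hu1]
      rcases eq_or_lt_of_le h1 with h2 | h2
      · have hu2 : u ∈ Icc m t := ⟨h2.ge, hu.2⟩
        have D₂ : HasDerivWithinAt f (v u (f u)) (Icc m t) u := by
          have := (hf₂ u hu2).congr heq₂ (heq₂ u hu2)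
          rwa [heq₂ u hu2]
        exact D₁.union D₂
      · have D₂ : HasDerivWithinAt f (v u (f u)) (Icc m t) u := by
          apply hd_nmem
          rw [closure_Icc]
          exact fun hc => absurd hc.1 (not_le.mpr h2)
        exact D₁.union D₂
    · have hu2 : u ∈ Icc m t := ⟨h1.le, hu.2⟩
      have D₂ : HasDerivWithinAt f (v u (f u)) (Icc m t) u := by
        have := (hf₂ u hu2).congr heq₂ (heq₂ u hu2)
        rwa [heq₂ u hu2]
      have D₁ : HasDerivWithinAt f (v u (f u)) (Icc s m) u := by
        apply hd_nmem
        rw [closure_Icc]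
        exact fun hc => absurd hc.2 (not_le.mpr h1)
      exact D₁.union D₂

/-- Every symplectic differential system (with `A, B` of class `C¹`, `C`
continuous, `B, C` symmetric, `B` invertible) is isomorphic to a Morse–Sturm
system: taking `W = 0` and `Z` the solution of `Z' = −ZA`, `Z(a) = Id` (which is
invertible), the transformed system has vanishing diagonal block
`Ã = ZAZ⁻¹ + Z'Z⁻¹ = 0`. -/
theorem stmt_17 (n : ℕ) (a b : ℝ) (hab : a ≤ b)
    (A dA : ℝ → V n →L[ℝ] V n) (B dB : ℝ → Dl n →L[ℝ] V n)
    (Binv : ℝ → V n →L[ℝ] Dl n) (C : ℝ → V n →L[ℝ] Dl n)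
    (hA : ∀ t ∈ Icc a b, HasDerivWithinAt A (dA t) (Icc a b) t)
    (hdAc : ContinuousOn dA (Icc a b)) (hAc : ContinuousOn A (Icc a b))
    (hB : ∀ t ∈ Icc a b, HasDerivWithinAt B (dB t) (Icc a b) t)
    (hdBc : ContinuousOn dB (Icc a b))
    (hCc : ContinuousOn C (Icc a b))
    (hBinv : ∀ t ∈ Icc a b, (∀ x : V n, B t (Binv t x) = x) ∧
      (∀ α : Dl n, Binv t (B t α) = α))
    (hBsymm : ∀ t ∈ Icc a b, ∀ α β : Dl n, β (B t α) = α (B t β))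
    (hCsymm : ∀ t ∈ Icc a b, ∀ x y : V n, C t x y = C t y x) :
    ∃ Z Zinv dZ : ℝ → V n →L[ℝ] V n,
      Z a = ContinuousLinearMap.id ℝ (V n) ∧
      (∀ t ∈ Icc a b, Zinv t ∘L Z t = ContinuousLinearMap.id ℝ (V n) ∧
        Z t ∘L Zinv t = ContinuousLinearMap.id ℝ (V n)) ∧
      (∀ t ∈ Icc a b, HasDerivWithinAt Z (dZ t) (Icc a b) t) ∧
      (∀ t ∈ Icc a b, dZ t = -(Z t ∘L A t)) ∧
      (∀ t ∈ Icc a b, (Z t ∘L A t) ∘L Zinv t + dZ t ∘L Zinv t = 0) := by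
  -- continuous extension of A to all of ℝ
  set Aext : ℝ → V n →L[ℝ] V n := fun t => A ↑(projIcc a b hab t) with hAext
  have hAextc : Continuous Aext :=
    hAc.comp_continuous (continuous_subtype_val.comp continuous_projIcc)
      fun t => (projIcc a b hab t).2
  have hAexteq : ∀ t ∈ Icc a b, Aext t = A t := by
    intro t ht
    simp [hAext, projIcc_of_mem hab ht]
  -- uniform bound
  obtain ⟨L₀, hL₀⟩ := isCompact_Icc.exists_bound_of_continuousOn hAc
  set Lr : ℝ := max L₀ 0 + 1 with hLr
  have hLrpos : 0 < Lr := by positivity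
  set L : ℝ≥0 := ⟨Lr, hLrpos.le⟩ with hLdef
  have hL : (0:ℝ) < L := hLrpos
  have hAb : ∀ t, ‖Aext t‖ ≤ L := by
    intro t
    have := hL₀ _ (projIcc a b hab t).2
    have h1 : L₀ ≤ Lr := by rw [hLr]; have := le_max_left L₀ 0; linarith
    exact le_trans this h1
  -- the two vector fields
  set vZ : ℝ → (V n →L[ℝ] V n) → (V n →L[ℝ] V n) := fun t x => -(x ∘L Aext t) with hvZ
  set vW : ℝ → (V n →L[ℝ] V n) → (V n →L[ℝ] V n) := fun t x => Aext t ∘L x with hvW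
  have hlipZ : ∀ t, LipschitzWith L (vZ t) := by
    intro t
    apply LipschitzWith.of_dist_le_mul
    intro x y
    rw [dist_eq_norm, dist_eq_norm]
    have he : vZ t x - vZ t y = (y - x) ∘L Aext t := by
      simp [hvZ, ContinuousLinearMap.sub_comp]; abel
    rw [he]
    calc ‖(y - x) ∘L Aext t‖ ≤ ‖y - x‖ * ‖Aext t‖ := ContinuousLinearMap.opNorm_comp_le _ _
      _ ≤ ‖y - x‖ * L := by nlinarith [hAb t, norm_nonneg (y - x)]
      _ = (L:ℝ) * ‖x - y‖ := by rw [norm_sub_rev]; ring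
  have hlipW : ∀ t, LipschitzWith L (vW t) := by
    intro t
    apply LipschitzWith.of_dist_le_mul
    intro x y
    rw [dist_eq_norm, dist_eq_norm]
    have he : vW t x - vW t y = Aext t ∘L (x - y) := by
      simp [hvW, ContinuousLinearMap.comp_sub]
    rw [he]
    calc ‖Aext t ∘L (x - y)‖ ≤ ‖Aext t‖ * ‖x - y‖ := ContinuousLinearMap.opNorm_comp_le _ _
      _ ≤ (L:ℝ) * ‖x - y‖ := by nlinarith [hAb t, norm_nonneg (x - y)]
  have hnormZ : ∀ t x, ‖vZ t x‖ ≤ L * ‖x‖ := by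
    intro t x
    rw [hvZ]
    simp only [norm_neg]
    calc ‖x ∘L Aext t‖ ≤ ‖x‖ * ‖Aext t‖ := ContinuousLinearMap.opNorm_comp_le _ _
      _ ≤ (L:ℝ) * ‖x‖ := by nlinarith [hAb t, norm_nonneg x]
  have hnormW : ∀ t x, ‖vW t x‖ ≤ L * ‖x‖ := by
    intro t x
    calc ‖Aext t ∘L x‖ ≤ ‖Aext t‖ * ‖x‖ := ContinuousLinearMap.opNorm_comp_le _ _
      _ ≤ (L:ℝ) * ‖x‖ := by nlinarith [hAb t, norm_nonneg x]
  have hcontZ : ∀ x, Continuous fun t => vZ t x :=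
    fun x => (continuous_const.clm_comp hAextc).neg
  have hcontW : ∀ x, Continuous fun t => vW t x :=
    fun x => hAextc.clm_comp continuous_const
  -- number of steps
  obtain ⟨k, hk⟩ := exists_nat_ge ((b - a) * (2 * L))
  have hkb : b - a ≤ (k:ℝ) * (1 / (2 * L)) := by
    rw [mul_one_div, le_div_iff₀ (by positivity)]
    exact hk
  obtain ⟨Z, hZa, hZd⟩ := glob_ex vZ L hL hlipZ hnormZ hcontZ k a b
    (ContinuousLinearMap.id ℝ (V n)) hab hkb
  obtain ⟨W, hWa, hWd⟩ := glob_ex vW L hL hlipW hnormW hcontW k a b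
    (ContinuousLinearMap.id ℝ (V n)) hab hkb
  -- Z ∘ W is constant equal to id
  have hZW : ∀ t ∈ Icc a b, Z t ∘L W t = ContinuousLinearMap.id ℝ (V n) := by
    have hg : ∀ t ∈ Icc a b,
        HasDerivWithinAt (fun u => Z u ∘L W u) 0 (Icc a b) t := by
      intro t ht
      have := (hZd t ht).clm_comp (hWd t ht)
      have hval : (vZ t (Z t)) ∘L W t + Z t ∘L (vW t (W t)) = 0 := by
        simp [hvZ, hvW, ContinuousLinearMap.neg_comp, ContinuousLinearMap.comp_assoc]
      rwa [hval] at this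
    have hconst := constant_of_has_deriv_right_zero
      (f := fun u => Z u ∘L W u) (a := a) (b := b)
      (fun t ht => (hg t ht).continuousWithinAt)
      (fun x hx => (hg x (Ico_subset_Icc_self hx)).mono_of_mem_nhdsWithin
        (Icc_mem_nhdsGE_of_mem hx))
    intro t ht
    have h2 := hconst t ht
    rw [h2, hZa, hWa]
    rfl
  have hWZ : ∀ t ∈ Icc a b, W t ∘L Z t = ContinuousLinearMap.id ℝ (V n) := by
    intro t ht
    have hZWt := hZW t ht
    have hZWapp : ∀ x, Z t (W t x) = x := fun x => by
      have := ContinuousLinearMap.ext_iff.mp hZWt x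
      simpa using this
    have hWinj : Function.Injective (W t) := fun x y hxy => by
      have := congrArg (Z t) hxy
      rwa [hZWapp, hZWapp] at this
    have hWsurj : Function.Surjective (W t) := by
      have := LinearMap.injective_iff_surjective
        (f := ((W t : V n →L[ℝ] V n) : V n →ₗ[ℝ] V n))
      rw [ContinuousLinearMap.coe_coe] at this
      exact this.mp hWinj
    apply ContinuousLinearMap.ext
    intro x
    obtain ⟨y, hy⟩ := hWsurj x
    simp only [ContinuousLinearMap.comp_apply, ContinuousLinearMap.id_apply]
    rw [← hy, hZWapp]
  refine ⟨Z, W, fun t => -(Z t ∘L A t), hZa, fun t ht => ⟨hWZ t ht, hZW t ht⟩,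
    fun t ht => ?_, fun t ht => rfl, fun t ht => ?_⟩
  · have := hZd t ht
    rw [hvZ] at this
    simp only at this
    rwa [hAexteq t ht] at this
  · rw [ContinuousLinearMap.neg_comp]
    exact add_neg_cancel _
end
end
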